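/- (Lemma 2, superadditivity under splitting) Suppose T_i = (i-1)ΔT_w + T₁ₐ + (i-1)ΔT_t + T₁ₜ, with ΔT_w ≤ T₁ₐ and ΔT_t ≤ T_Y. Then for any M ≥ 1 and positive integers n₁,…,n_M with ∑ⱼ nⱼ = i, one has T_i ≤ ∑_{j=1}^{M} T_{nⱼ} + (M-1)·T_Y. -/
import Mathlib


/-- Splitting i cars across M green phases (each incurring a yellow interval T_Y
    between phases) takes at least as long as serving them in one phase. -/
theorem stmt_5 (ΔTw T₁a ΔTt T₁t TY : ℝ)
    (hΔTw : 0 ≤ ΔTw) (hT₁a : 0 ≤ T₁a) (hΔTt : 0 ≤ ΔTt) (hT₁t : 0 ≤ T₁t)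
    (hTY : 0 < TY) (h1 : ΔTw ≤ T₁a) (h2 : ΔTt ≤ TY)
    (T : ℕ → ℝ)
    (hT : ∀ i : ℕ, T i = ((i : ℝ) - 1) * ΔTw + T₁a + ((i : ℝ) - 1) * ΔTt + T₁t)
    (M : ℕ) (hM : 1 ≤ M) (n : Fin M → ℕ) (hn : ∀ j, 1 ≤ n j)
    (i : ℕ) (hi : ∑ j, n j = i) :
    T i ≤ (∑ j, T (n j)) + ((M : ℝ) - 1) * TY := by
  have hs : (∑ j, ((n j : ℝ))) = (i : ℝ) := by
    rw [← hi]; push_cast; ring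
  have hsum : ∑ j, T (n j)
      = ((i:ℝ) - M) * ΔTw + M * T₁a + ((i:ℝ) - M) * ΔTt + M * T₁t := by
    simp only [hT]
    rw [Finset.sum_add_distrib, Finset.sum_add_distrib, Finset.sum_add_distrib,
        ← Finset.sum_mul, ← Finset.sum_mul]
    simp [hs, Finset.sum_const, Finset.card_univ]
  rw [hT, hsum]
  have hM' : (1:ℝ) ≤ M := by exact_mod_cast hM
  nlinarith [mul_nonneg (sub_nonneg.2 hM') (sub_nonneg.2 h1),
             mul_nonneg (sub_nonneg.2 hM') (sub_nonneg.2 h2),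
             mul_nonneg (sub_nonneg.2 hM') hT₁t]
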